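/- arXiv:math/0005154 — 2 statements merged into one kernel-verified Lean document; each statement's English description precedes it below -/
import Mathlib

section
/- Let f : ℝ → ℝ be continuously differentiable and R > 0. Then f(R)^2 ≤ (2/R) ∫_{R}^{R+1} (|f'(r)|^2 + |f(r)|^2) r dr. -/
/-!
Integrating `(f²)' = 2 f f'` and using `-2 f f' ≤ f'² + f²` gives
`f(R)² ≤ f(r)² + ∫_R^{R+1} (f'² + f²)` for every `r ∈ [R, R+1]`; averaging over `r` bounds
`f(R)²` by twice that energy, and the weight `r / R ≥ 1` on `[R, R+1]` costs nothing.
-/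

open MeasureTheory intervalIntegral

theorem sq_le_sq_add_integral_deriv_sq_add_sq {f : ℝ → ℝ} (hf : ContDiff ℝ 1 f) {a b : ℝ}
    (hab : a ≤ b) : f a ^ 2 ≤ f b ^ 2 + ∫ t in a..b, (deriv f t ^ 2 + f t ^ 2) := by
  have hftc : ∫ t in a..b, 2 * f t * deriv f t = f b ^ 2 - f a ^ 2 := by
    refine integral_eq_sub_of_hasDerivAt (f := fun x => f x ^ 2) (fun t _ => ?_)
      ((by fun_prop : Continuous fun t => 2 * f t * deriv f t).intervalIntegrable _ _)
    simpa [mul_comm] using ((hf.differentiable one_ne_zero t).hasDerivAt).fun_pow 2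
  have hmono : ∫ t in a..b, -(2 * f t * deriv f t) ≤ ∫ t in a..b, (deriv f t ^ 2 + f t ^ 2) :=
    integral_mono_on hab
      ((by fun_prop : Continuous fun t => -(2 * f t * deriv f t)).intervalIntegrable _ _)
      ((by fun_prop : Continuous fun t => deriv f t ^ 2 + f t ^ 2).intervalIntegrable _ _)
      (fun t _ => by nlinarith [sq_nonneg (f t + deriv f t)])
  rw [intervalIntegral.integral_neg, hftc] at hmono
  linarith

theorem sq_le_two_mul_integral_deriv_sq_add_sq {f : ℝ → ℝ} (hf : ContDiff ℝ 1 f) (a : ℝ) :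
    f a ^ 2 ≤ 2 * ∫ t in a..(a + 1), (deriv f t ^ 2 + f t ^ 2) := by
  set C := ∫ t in a..(a + 1), (deriv f t ^ 2 + f t ^ 2)
  have ha : a ≤ a + 1 := by linarith
  have hE : Continuous fun t => deriv f t ^ 2 + f t ^ 2 := by fun_prop
  have hf2 : Continuous fun t => f t ^ 2 := by fun_prop
  have hpointwise : ∀ r ∈ Set.Icc a (a + 1), f a ^ 2 ≤ f r ^ 2 + C := fun r hr =>
    (sq_le_sq_add_integral_deriv_sq_add_sq hf hr.1).trans <| add_le_add_right
      (integral_mono_interval le_rfl hr.1 hr.2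
        (Filter.Eventually.of_forall fun t => by positivity) (hE.intervalIntegrable _ _)) _
  have haverage : f a ^ 2 ≤ (∫ r in a..(a + 1), f r ^ 2) + C := by
    have := integral_mono_on ha (intervalIntegrable_const (μ := volume))
      ((hf2.add continuous_const).intervalIntegrable _ _) hpointwise
    simpa [integral_add (hf2.intervalIntegrable _ _) intervalIntegrable_const] using this
  have hsq : ∫ r in a..(a + 1), f r ^ 2 ≤ C :=
    integral_mono_on ha (hf2.intervalIntegrable _ _) (hE.intervalIntegrable _ _)
      (fun r _ => le_add_of_nonneg_left (sq_nonneg _))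
  linarith

theorem mul_integral_le_integral_mul_id {g : ℝ → ℝ} {a b : ℝ} (hab : a ≤ b)
    (hg : IntervalIntegrable g volume a b) (hg0 : ∀ r ∈ Set.Icc a b, 0 ≤ g r) :
    a * ∫ r in a..b, g r ≤ ∫ r in a..b, g r * r := by
  rw [← intervalIntegral.integral_const_mul]
  exact integral_mono_on hab (hg.const_mul a) (hg.mul_continuousOn continuousOn_id)
    (fun r hr => by rw [mul_comm]; exact mul_le_mul_of_nonneg_left hr.1 (hg0 r hr))

/-- Trace-type inequality: `f(R)^2 ≤ (2/R) ∫_R^{R+1} (|f'|^2 + |f|^2) r dr`. -/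
theorem stmt0 (f : ℝ → ℝ) (hf : ContDiff ℝ 1 f) (R : ℝ) (hR : 0 < R) :
    f R ^ 2 ≤ (2 / R) * ∫ r in R..(R + 1), (|deriv f r| ^ 2 + |f r| ^ 2) * r := by
  simp only [sq_abs]
  have hweight := mul_integral_le_integral_mul_id (g := fun t => deriv f t ^ 2 + f t ^ 2)
    (by linarith : R ≤ R + 1)
    ((by fun_prop : Continuous fun t => deriv f t ^ 2 + f t ^ 2).intervalIntegrable _ _)
    (fun r _ => by positivity)
  rw [div_mul_eq_mul_div, le_div_iff₀ hR]
  nlinarith [sq_le_two_mul_integral_deriv_sq_add_sq hf R]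
end

section
/- There exists a constant c > 0 such that for every continuously differentiable function f : ℝ² → ℝ and every ρ > 0, ∫_{ρ ≤ |x| ≤ 2ρ} f(x)²/|x|² dx ≤ c ( ∫_{2ρ ≤ |x| ≤ 4ρ} f(x)²/|x|² dx + ∫_{ρ ≤ |x| ≤ 4ρ} |∂_r f(x)|² dx ), where ∂_r f denotes the radial derivative of f, and the constant c is independent of ρ. -/
/-!
Writing `∂ᵣf` for `radialDeriv f`, along a ray `f x = f (2 • x) - ‖x‖ * ∫₁² ∂ᵣf (t • x) dt`, and
Cauchy–Schwarz on `[1, 2]` gives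
`f x ^ 2 / ‖x‖ ^ 2 ≤ 8 f (2 • x) ^ 2 / ‖2 • x‖ ^ 2 + 2 ∫₁² (∂ᵣf (t • x)) ^ 2 dt`.
Integrate over the annulus `ρ ≤ ‖x‖ ≤ 2ρ`: the dilation by `2` carries it onto `2ρ ≤ ‖x‖ ≤ 4ρ`
with Jacobian `2 ^ n`, and each dilation by `t ∈ [1, 2]` carries it into `ρ ≤ ‖x‖ ≤ 4ρ` with
Jacobian `t ^ n ≥ 1`. In the plane this gives the constant `8 / 2 ^ 2 = 2`.
-/

open MeasureTheory Set Pointwise Module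

variable {E : Type*} [NormedAddCommGroup E] {a b : ℝ}

def annulus (a b : ℝ) : Set E := {x | a ≤ ‖x‖ ∧ ‖x‖ ≤ b}

lemma annulus_subset_compl_zero (ha : 0 < a) : (annulus a b : Set E) ⊆ {0}ᶜ :=
  fun _ hx => norm_pos_iff.1 (ha.trans_le hx.1)

lemma isCompact_annulus [ProperSpace E] : IsCompact (annulus a b : Set E) := by
  have : (annulus a b : Set E) = Metric.closedBall 0 b ∩ {x | a ≤ ‖x‖} := by
    ext x; simp [annulus, and_comm]
  rw [this]
  exact (isCompact_closedBall 0 b).inter_right (isClosed_le continuous_const continuous_norm)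

variable [NormedSpace ℝ E]

lemma smul_annulus {t : ℝ} (ht : 0 < t) :
    t • (annulus a b : Set E) = annulus (t * a) (t * b) := by
  ext y
  rw [mem_smul_set_iff_inv_smul_mem₀ ht.ne']
  simp only [annulus, mem_ofPred_eq, norm_smul, norm_inv, Real.norm_of_nonneg ht.le]
  rw [← div_eq_inv_mul, le_div_iff₀' ht, div_le_iff₀' ht]

noncomputable def radialDeriv (f : E → ℝ) (x : E) : ℝ := fderiv ℝ f x (‖x‖⁻¹ • x)

variable {f : E → ℝ}

lemma ContDiff.continuousOn_radialDeriv (hf : ContDiff ℝ 1 f) :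
    ContinuousOn (radialDeriv f) {0}ᶜ :=
  (hf.continuous_fderiv one_ne_zero).continuousOn.clm_apply
    ((continuous_norm.continuousOn.inv₀ (s := {0}ᶜ) fun _ hx => norm_ne_zero_iff.2 hx).smul
      continuousOn_id)

lemma fderiv_smul_apply_eq_norm_mul_radialDeriv (f : E → ℝ) (x : E) {t : ℝ} (ht : 0 < t) :
    fderiv ℝ f (t • x) x = ‖x‖ * radialDeriv f (t • x) := by
  rcases eq_or_ne x 0 with rfl | hx
  · simp
  have hdir : ‖t • x‖⁻¹ • (t • x) = ‖x‖⁻¹ • x := by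
    rw [norm_smul, Real.norm_of_nonneg ht.le, smul_smul, mul_inv, mul_comm t⁻¹,
      mul_assoc, inv_mul_cancel₀ ht.ne', mul_one]
  rw [radialDeriv, hdir, ← smul_eq_mul, ← map_smul, smul_smul,
    mul_inv_cancel₀ (norm_ne_zero_iff.2 hx), one_smul]

lemma ContDiff.sub_eq_integral_fderiv_smul (hf : ContDiff ℝ 1 f) (x : E) (a b : ℝ) :
    f (b • x) - f (a • x) = ∫ t in a..b, fderiv ℝ f (t • x) x := by
  have hderiv : ∀ t : ℝ, HasDerivAt (fun s : ℝ => f (s • x)) (fderiv ℝ f (t • x) x) t := by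
    intro t
    have := ((hf.differentiable one_ne_zero) (t • x)).hasFDerivAt.comp_hasDerivAt t
      ((hasDerivAt_id t).smul_const x)
    rwa [one_smul] at this
  have hcont : Continuous fun t : ℝ => fderiv ℝ f (t • x) x :=
    ((hf.continuous_fderiv one_ne_zero).comp (continuous_id.smul continuous_const)).clm_apply
      continuous_const
  rw [intervalIntegral.integral_eq_sub_of_hasDerivAt (fun t _ => hderiv t)
    (hcont.intervalIntegrable a b)]

lemma sq_setIntegral_le_measureReal_mul {α : Type*} [MeasurableSpace α] {μ : Measure α}
    {s : Set α} {g : α → ℝ} (hs : μ s ≠ ⊤) (hg : IntegrableOn g s μ)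
    (hg2 : IntegrableOn (fun x => g x ^ 2) s μ) :
    (∫ x in s, g x ∂μ) ^ 2 ≤ μ.real s * ∫ x in s, g x ^ 2 ∂μ := by
  rcases eq_or_ne (μ s) 0 with h0 | h0
  · simp [Measure.restrict_eq_zero.2 h0]
  have hm : 0 < μ.real s := ENNReal.toReal_pos h0 hs
  have hJensen := (even_two.convexOn_pow (𝕜 := ℝ)).map_set_average_le (continuousOn_pow 2)
    isClosed_univ h0 hs (by simp) hg hg2
  simp only [setAverage_eq, smul_eq_mul] at hJensen
  rw [mul_pow, ← le_div_iff₀' (by positivity)] at hJensen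
  calc (∫ x in s, g x ∂μ) ^ 2 ≤ (μ.real s)⁻¹ * (∫ x in s, g x ^ 2 ∂μ) / (μ.real s)⁻¹ ^ 2 :=
        hJensen
    _ = μ.real s * ∫ x in s, g x ^ 2 ∂μ := by field_simp

lemma ContDiff.sq_div_norm_sq_le (hf : ContDiff ℝ 1 f) {x : E} (hx : x ≠ 0) :
    f x ^ 2 / ‖x‖ ^ 2 ≤ 8 * (f ((2 : ℝ) • x) ^ 2 / ‖(2 : ℝ) • x‖ ^ 2)
      + 2 * ∫ t in Ioc (1 : ℝ) 2, radialDeriv f (t • x) ^ 2 := by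
  set I := ∫ t in Ioc (1 : ℝ) 2, radialDeriv f (t • x)
  set K := ∫ t in Ioc (1 : ℝ) 2, radialDeriv f (t • x) ^ 2
  have hdiff : f ((2 : ℝ) • x) - f x = ‖x‖ * I :=
    calc f ((2 : ℝ) • x) - f x = ∫ t in (1 : ℝ)..2, fderiv ℝ f (t • x) x := by
          simpa using hf.sub_eq_integral_fderiv_smul x 1 2
      _ = ∫ t in (1 : ℝ)..2, ‖x‖ * radialDeriv f (t • x) :=
          intervalIntegral.integral_congr fun t ht =>
            fderiv_smul_apply_eq_norm_mul_radialDeriv f x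
              (one_pos.trans_le (uIcc_of_le (one_le_two (α := ℝ)) ▸ ht).1)
      _ = ‖x‖ * I := by
          rw [intervalIntegral.integral_const_mul, intervalIntegral.integral_of_le one_le_two]
  have hcont : ContinuousOn (fun t : ℝ => radialDeriv f (t • x)) (Icc 1 2) :=
    hf.continuousOn_radialDeriv.comp (continuous_id.smul continuous_const).continuousOn
      fun t ht => smul_ne_zero (one_pos.trans_le ht.1).ne' hx
  have hCS : I ^ 2 ≤ K := by
    have := sq_setIntegral_le_measureReal_mul (μ := volume) measure_Ioc_lt_top.ne
        ((hcont.integrableOn_compact isCompact_Icc).mono_set Ioc_subset_Icc_self)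
        (((hcont.pow 2).integrableOn_compact isCompact_Icc).mono_set Ioc_subset_Icc_self)
    norm_num at this
    exact this
  have hsq : f x ^ 2 ≤ 2 * f ((2 : ℝ) • x) ^ 2 + 2 * ‖x‖ ^ 2 * K := by
    rw [show f x = f ((2 : ℝ) • x) - ‖x‖ * I by linarith]
    nlinarith [sq_nonneg (f ((2 : ℝ) • x) + ‖x‖ * I),
      mul_le_mul_of_nonneg_left hCS (sq_nonneg ‖x‖)]
  rw [norm_smul, Real.norm_two, div_le_iff₀ (by positivity)]
  calc f x ^ 2 ≤ 2 * f ((2 : ℝ) • x) ^ 2 + 2 * ‖x‖ ^ 2 * K := hsq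
    _ = _ := by field_simp; ring

section Integrals

variable [FiniteDimensional ℝ E] [MeasurableSpace E] [BorelSpace E] {μ : Measure E}
  [μ.IsAddHaarMeasure] {g : E → ℝ}

lemma integrableOn_annulus (hg : ContinuousOn g {0}ᶜ) (ha : 0 < a) :
    IntegrableOn g (annulus a b) μ :=
  (hg.mono (annulus_subset_compl_zero ha)).integrableOn_compact isCompact_annulus

lemma integrable_comp_smul_annulus_prod_Ioc (hg : ContinuousOn g {0}ᶜ) (ha : 0 < a) :
    Integrable (fun p : E × ℝ => g (p.2 • p.1))
      ((μ.restrict (annulus a b)).prod (volume.restrict (Ioc 1 2))) := by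
  rw [Measure.prod_restrict]
  have hmaps : MapsTo (fun p : E × ℝ => p.2 • p.1) (annulus a b ×ˢ Icc 1 2) {0}ᶜ :=
    fun p hp => smul_ne_zero (one_pos.trans_le hp.2.1).ne' (annulus_subset_compl_zero ha hp.1)
  exact ((hg.comp (continuous_snd.smul continuous_fst).continuousOn hmaps).integrableOn_compact
    (isCompact_annulus.prod isCompact_Icc)).mono_set (prod_mono_right Ioc_subset_Icc_self)

lemma setIntegral_annulus_comp_smul_le (hg0 : ∀ x, 0 ≤ g x)
    (hg : IntegrableOn g (annulus a (2 * b)) μ) (ha : 0 ≤ a) {t : ℝ} (ht : t ∈ Icc 1 2) :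
    ∫ x in annulus a b, g (t • x) ∂μ ≤ ∫ x in annulus a (2 * b), g x ∂μ := by
  have htpos : 0 < t := one_pos.trans_le ht.1
  have hsub : annulus (t * a) (t * b) ⊆ (annulus a (2 * b) : Set E) := fun x hx =>
    ⟨by nlinarith [hx.1, ht.1], by nlinarith [hx.1, hx.2, ht.2, norm_nonneg x]⟩
  have hmono : ∫ x in annulus (t * a) (t * b), g x ∂μ ≤ ∫ x in annulus a (2 * b), g x ∂μ :=
    setIntegral_mono_set hg (ae_of_all _ fun x => hg0 x) hsub.eventuallyLE
  have hJac : ((t ^ finrank ℝ E)⁻¹ : ℝ) ≤ 1 := inv_le_one_of_one_le₀ (one_le_pow₀ ht.1)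
  rw [Measure.setIntegral_comp_smul_of_pos μ g _ htpos, smul_annulus htpos, smul_eq_mul]
  calc (t ^ finrank ℝ E)⁻¹ * ∫ x in annulus (t * a) (t * b), g x ∂μ
      ≤ ∫ x in annulus (t * a) (t * b), g x ∂μ :=
        mul_le_of_le_one_left (integral_nonneg hg0) hJac
    _ ≤ _ := hmono

lemma integral_annulus_integral_comp_smul_le (hg0 : ∀ x, 0 ≤ g x) (hg : ContinuousOn g {0}ᶜ)
    (ha : 0 < a) :
    ∫ x in annulus a b, (∫ t in Ioc (1 : ℝ) 2, g (t • x)) ∂μ ≤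
      ∫ x in annulus a (2 * b), g x ∂μ := by
  have hprod := integrable_comp_smul_annulus_prod_Ioc (μ := μ) (b := b) hg ha
  rw [integral_integral_swap hprod]
  calc ∫ t in Ioc (1 : ℝ) 2, ∫ x in annulus a b, g (t • x) ∂μ
      ≤ ∫ _ in Ioc (1 : ℝ) 2, ∫ x in annulus a (2 * b), g x ∂μ :=
        setIntegral_mono_on hprod.integral_prod_right (integrableOn_const measure_Ioc_lt_top.ne)
          measurableSet_Ioc fun t ht => setIntegral_annulus_comp_smul_le hg0
            (integrableOn_annulus hg ha) ha.le (Ioc_subset_Icc_self ht)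
    _ = ∫ x in annulus a (2 * b), g x ∂μ := by
        norm_num [Real.volume_real_Ioc_of_le one_le_two]

theorem ContDiff.integral_annulus_sq_div_norm_sq_le (hf : ContDiff ℝ 1 f) (ha : 0 < a) :
    ∫ x in annulus a b, f x ^ 2 / ‖x‖ ^ 2 ∂μ ≤
      8 / 2 ^ finrank ℝ E * ∫ x in annulus (2 * a) (2 * b), f x ^ 2 / ‖x‖ ^ 2 ∂μ
        + 2 * ∫ x in annulus a (2 * b), radialDeriv f x ^ 2 ∂μ := by
  set w : E → ℝ := fun x => f x ^ 2 / ‖x‖ ^ 2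
  set K : E → ℝ := fun x => ∫ t in Ioc (1 : ℝ) 2, radialDeriv f (t • x) ^ 2
  have hw : ContinuousOn w {0}ᶜ :=
    (hf.continuous.pow 2).continuousOn.div (continuous_norm.pow 2).continuousOn
      fun x hx => pow_ne_zero 2 (norm_ne_zero_iff.2 hx)
  have hD : ContinuousOn (fun x => radialDeriv f x ^ 2) {0}ᶜ := hf.continuousOn_radialDeriv.pow 2
  have hw2 : IntegrableOn (fun x => w ((2 : ℝ) • x)) (annulus a b) μ :=
    integrableOn_annulus (hw.comp (continuous_const_smul _).continuousOn
      fun x hx => smul_ne_zero two_ne_zero hx) ha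
  have hK : IntegrableOn K (annulus a b) μ :=
    (integrable_comp_smul_annulus_prod_Ioc hD ha).integral_prod_left
  calc ∫ x in annulus a b, w x ∂μ
      ≤ ∫ x in annulus a b, (8 * w ((2 : ℝ) • x) + 2 * K x) ∂μ :=
        setIntegral_mono_on (integrableOn_annulus hw ha) ((hw2.const_mul 8).add (hK.const_mul 2))
          isCompact_annulus.isClosed.measurableSet
          fun x hx => hf.sq_div_norm_sq_le (annulus_subset_compl_zero ha hx)
    _ = 8 * ∫ x in annulus a b, w ((2 : ℝ) • x) ∂μ + 2 * ∫ x in annulus a b, K x ∂μ := by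
        rw [integral_add (hw2.const_mul 8) (hK.const_mul 2), integral_const_mul,
          integral_const_mul]
    _ = 8 / 2 ^ finrank ℝ E * ∫ x in annulus (2 * a) (2 * b), w x ∂μ
          + 2 * ∫ x in annulus a b, K x ∂μ := by
        rw [Measure.setIntegral_comp_smul_of_pos μ w _ two_pos, smul_annulus two_pos, smul_eq_mul,
          ← mul_assoc, div_eq_mul_inv]
    _ ≤ _ := by
        gcongr
        exact integral_annulus_integral_comp_smul_le (fun x => sq_nonneg _) hD ha

end Integrals

/-- Scale-invariant Hardy-type estimate on annuli in the plane: there is a constant `c`,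
independent of `ρ`, such that the weighted `L²` norm of `f` on the annulus `ρ ≤ |x| ≤ 2ρ`
is controlled by the weighted `L²` norm on `2ρ ≤ |x| ≤ 4ρ` plus the `L²` norm of the
radial derivative on `ρ ≤ |x| ≤ 4ρ`. -/
theorem stmt1 :
    ∃ c : ℝ, 0 < c ∧
      ∀ (f : EuclideanSpace ℝ (Fin 2) → ℝ), ContDiff ℝ 1 f → ∀ ρ : ℝ, 0 < ρ →
        (∫ x in {x : EuclideanSpace ℝ (Fin 2) | ρ ≤ ‖x‖ ∧ ‖x‖ ≤ 2 * ρ}, f x ^ 2 / ‖x‖ ^ 2) ≤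
          c * ((∫ x in {x : EuclideanSpace ℝ (Fin 2) | 2 * ρ ≤ ‖x‖ ∧ ‖x‖ ≤ 4 * ρ},
                  f x ^ 2 / ‖x‖ ^ 2) +
               ∫ x in {x : EuclideanSpace ℝ (Fin 2) | ρ ≤ ‖x‖ ∧ ‖x‖ ≤ 4 * ρ},
                  (fderiv ℝ f x (‖x‖⁻¹ • x)) ^ 2) := by
  refine ⟨2, two_pos, fun f hf ρ hρ => ?_⟩
  have h := hf.integral_annulus_sq_div_norm_sq_le (μ := volume) (b := 2 * ρ) hρ
  rw [finrank_euclideanSpace_fin, show 2 * (2 * ρ) = 4 * ρ by ring] at h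
  unfold annulus radialDeriv at h
  linarith
end
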